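/- For the LS-Boost(ε) iterates with learning rate ε ∈ (0,1], any least squares solution β_LS, and every k ≥ 0, the ℓ1-shrinkage of the coefficients satisfies ‖β^k‖₁ ≤ min{ √k · √(ε/(2−ε)) · √(‖Xβ_LS‖₂² − ‖Xβ_LS − Xβ^k‖₂²) , (ε‖Xβ_LS‖₂/(1 − √γ))·(1 − γ^{k/2}) }, where γ := 1 − ε(2−ε)·λ_pmin(XᵀX)/(4p). -/

import Mathlib

open Matrix Finset


lemma lsb_quad_eq {n p : ℕ} (X : Matrix (Fin n) (Fin p) ℝ) (w : Fin p → ℝ) :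
    w ⬝ᵥ (Xᵀ * X) *ᵥ w = (X *ᵥ w) ⬝ᵥ (X *ᵥ w) := by
  rw [← mulVec_mulVec, dotProduct_mulVec, vecMul_transpose]

lemma lsb_dot_self_nonneg {m : ℕ} (v : Fin m → ℝ) : 0 ≤ v ⬝ᵥ v :=
  Finset.sum_nonneg fun i _ => mul_self_nonneg _

lemma lsb_dot_self_pos {m : ℕ} (v : Fin m → ℝ) (hv : v ≠ 0) : 0 < v ⬝ᵥ v := by
  rcases (lsb_dot_self_nonneg v).lt_or_eq with h | h
  · exact h
  · exfalso
    apply hv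
    ext i
    have := (Finset.sum_eq_zero_iff_of_nonneg (fun i _ => mul_self_nonneg (v i))).mp h.symm i
      (Finset.mem_univ i)
    have := mul_self_eq_zero.mp this
    simpa using this

lemma lsb_sqrt_pow (x : ℝ) (hx : 0 ≤ x) (i : ℕ) : Real.sqrt (x ^ i) = (Real.sqrt x) ^ i := by
  induction i with
  | zero => simp
  | succ i ih => rw [pow_succ, pow_succ, Real.sqrt_mul (pow_nonneg hx i), ih]

lemma lsb_expand {m : ℕ} (a v : Fin m → ℝ) (c : ℝ) :
    (a - c • v) ⬝ᵥ (a - c • v) = a ⬝ᵥ a - 2*c*(a ⬝ᵥ v) + c^2 * (v ⬝ᵥ v) := by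
  simp only [dotProduct, Pi.sub_apply, Pi.smul_apply, smul_eq_mul]
  have h : ∀ i : Fin m, (a i - c*v i)*(a i - c*v i)
      = a i*a i - 2*c*(a i*v i) + c^2*(v i*v i) := fun i => by ring
  simp_rw [h]
  rw [Finset.sum_add_distrib, Finset.sum_sub_distrib, ← Finset.mul_sum, ← Finset.mul_sum]

lemma lsb_eig_lower {n p : ℕ} (X : Matrix (Fin n) (Fin p) ℝ) (lam : ℝ)
    (hlam_min : ∀ μ : ℝ, (∃ v : Fin p → ℝ, v ≠ 0 ∧ (Xᵀ * X).mulVec v = μ • v) → μ ≠ 0 → lam ≤ μ)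
    (w : Fin p → ℝ) :
    lam * (w ⬝ᵥ (Xᵀ * X) *ᵥ w) ≤ ((Xᵀ * X) *ᵥ w) ⬝ᵥ ((Xᵀ * X) *ᵥ w) := by
  set A := Xᵀ * X with hA_def
  have hA : A.IsHermitian := by simpa [conjTranspose_eq_transpose_of_trivial] using isHermitian_conjTranspose_mul_self X
  set U : Matrix (Fin p) (Fin p) ℝ := (hA.eigenvectorUnitary : Matrix (Fin p) (Fin p) ℝ) with hU
  have hUU : star U * U = 1 := Unitary.coe_star_mul_self hA.eigenvectorUnitary
  have hUU' : U * star U = 1 := Unitary.coe_mul_star_self hA.eigenvectorUnitary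
  set μ := hA.eigenvalues with hμ
  have hspec : A = U * Matrix.diagonal μ * star U := by
    have := hA.spectral_theorem; simpa using this
  have hμ_nonneg : ∀ j, 0 ≤ μ j := fun j =>
    (posSemidef_conjTranspose_mul_self X).eigenvalues_nonneg j
  have hμ_key : ∀ j, lam * μ j ≤ μ j ^ 2 := by
    intro j
    rcases eq_or_ne (μ j) 0 with h0 | h0
    · simp [h0]
    · have hle : lam ≤ μ j := by
        refine hlam_min (μ j) ⟨⇑(hA.eigenvectorBasis j), ?_, hA.mulVec_eigenvectorBasis j⟩ h0
        exact fun hz => (hA.eigenvectorBasis.orthonormal.ne_zero j) (by ext i; exact congrFun hz i)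
      nlinarith [hμ_nonneg j]
  set c := (star U) *ᵥ w with hc
  have hdot : ∀ x z : Fin p → ℝ, (U *ᵥ x) ⬝ᵥ (U *ᵥ z) = x ⬝ᵥ z := by
    intro x z
    rw [dotProduct_mulVec, ← vecMul_transpose, vecMul_vecMul]
    have h : Uᵀ * U = 1 := by rwa [← conjTranspose_eq_transpose_of_trivial, ← star_eq_conjTranspose]
    rw [h, vecMul_one]
  have hAw : A *ᵥ w = U *ᵥ ((Matrix.diagonal μ) *ᵥ c) := by
    rw [hspec, hc, mulVec_mulVec, mulVec_mulVec]
  have hwU : w ⬝ᵥ (U *ᵥ ((Matrix.diagonal μ) *ᵥ c)) = c ⬝ᵥ ((Matrix.diagonal μ) *ᵥ c) := by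
    have hw : w = U *ᵥ c := by rw [hc, mulVec_mulVec, hUU', one_mulVec]
    conv_lhs => rw [hw]
    exact hdot c _
  rw [hAw, hdot, hwU]
  simp only [dotProduct, mulVec_diagonal]
  rw [Finset.mul_sum]
  apply Finset.sum_le_sum
  intro j _
  nlinarith [sq_nonneg (c j), hμ_nonneg j, hμ_key j]


noncomputable section

/-- **Theorem 2.1(v) (ℓ1-shrinkage of coefficients).** For the LS-Boost(ε) iterates with
learning rate ε ∈ (0,1], any least squares solution β_LS, and every k ≥ 0:
`‖β^k‖₁ ≤ min{ √k·√(ε/(2−ε))·√(‖Xβ_LS‖₂² − ‖Xβ_LS − Xβ^k‖₂²) ,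
               (ε‖Xβ_LS‖₂/(1−√γ))·(1 − γ^{k/2}) }`. -/
theorem lsboost_l1_shrinkage
    (n p : ℕ) (hn : 0 < n) (hp : 0 < p)
    (X : Matrix (Fin n) (Fin p) ℝ) (hX : X ≠ 0)
    (hcols : ∀ j : Fin p, ∑ i, (X i j) ^ 2 = 1)
    (y : Fin n → ℝ)
    -- `lam` is the smallest nonzero eigenvalue of XᵀX
    (lam : ℝ)
    (hlam_eig : ∃ v : Fin p → ℝ, v ≠ 0 ∧ (Xᵀ * X).mulVec v = lam • v)
    (hlam_ne : lam ≠ 0)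
    (hlam_min : ∀ μ : ℝ, (∃ v : Fin p → ℝ, v ≠ 0 ∧ (Xᵀ * X).mulVec v = μ • v) → μ ≠ 0 → lam ≤ μ)
    -- LS-Boost(ε) iterates
    (ε : ℝ) (hε0 : 0 < ε) (hε1 : ε ≤ 1)
    (β : ℕ → Fin p → ℝ) (hβ0 : β 0 = 0)
    (r : ℕ → Fin n → ℝ) (hr : ∀ k, r k = y - X.mulVec (β k))
    (jj : ℕ → Fin p)
    (hjmax : ∀ k, ∀ j' : Fin p, |∑ i, r k i * X i j'| ≤ |∑ i, r k i * X i (jj k)|)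
    (hupd : ∀ k, β (k + 1) = β k +
      (ε * (∑ i, r k i * X i (jj k))) • (Pi.single (jj k) (1 : ℝ) : Fin p → ℝ))
    -- βLS is any least squares solution
    (βLS : Fin p → ℝ) (hβLS : (Xᵀ * X).mulVec βLS = Xᵀ.mulVec y)
    (γ : ℝ) (hγ : γ = 1 - ε * (2 - ε) * lam / (4 * (p : ℝ))) :
    ∀ k : ℕ, (∑ j, |β k j|) ≤
      min (Real.sqrt (k : ℝ) * Real.sqrt (ε / (2 - ε)) *
            Real.sqrt ((∑ i, (X.mulVec βLS i) ^ 2) -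
              ∑ i, (X.mulVec βLS i - X.mulVec (β k) i) ^ 2))
          ((ε * Real.sqrt (∑ i, (X.mulVec βLS i) ^ 2) / (1 - Real.sqrt γ)) *
            (1 - γ ^ ((k : ℝ) / 2))) := by
  have hpR : (0:ℝ) < (p:ℝ) := by exact_mod_cast hp
  have hε2 : (0:ℝ) < 2 - ε := by linarith
  set A := Xᵀ * X with hA_def
  set w : ℕ → Fin p → ℝ := fun k => βLS - β k with hw
  set d : ℕ → ℝ := fun k => (X *ᵥ (w k)) ⬝ᵥ (X *ᵥ (w k)) with hd
  set u : ℕ → ℝ := fun k => ∑ i, r k i * X i (jj k) with hu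
  -- residual correlations
  have hXtr : ∀ k, Xᵀ *ᵥ (r k) = A *ᵥ (w k) := by
    intro k
    have h1 : A *ᵥ (w k) = A *ᵥ βLS - A *ᵥ β k := by
      show A *ᵥ (βLS - β k) = _
      exact mulVec_sub A βLS (β k)
    rw [hr k, mulVec_sub, h1, hβLS, hA_def, ← mulVec_mulVec]
  have hcorr : ∀ k, ∀ j, (∑ i, r k i * X i j) = (A *ᵥ (w k)) j := by
    intro k j
    rw [← hXtr k]
    simp [mulVec, dotProduct, transpose_apply, mul_comm]
  have hu_eq : ∀ k, u k = (A *ᵥ w k) (jj k) := fun k => hcorr k (jj k)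
  -- column facts
  have hcol1 : ∀ j, (fun i => X i j) ⬝ᵥ (fun i => X i j) = 1 := by
    intro j
    simpa [dotProduct, pow_two] using hcols j
  have hmix : ∀ k, (X *ᵥ w k) ⬝ᵥ (fun i => X i (jj k)) = u k := by
    intro k
    rw [hu_eq k, hA_def, ← mulVec_mulVec]
    simp [mulVec, dotProduct, transpose_apply, mul_comm]
  -- recursion for d
  have hd_rec : ∀ k, d (k+1) = d k - ε * (2 - ε) * (u k)^2 := by
    intro k
    have hwsucc : w (k+1) = w k - (ε * u k) • (Pi.single (jj k) (1:ℝ) : Fin p → ℝ) := by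
      simp only [hw, hupd k, hu]
      ext j
      simp [Pi.single_apply]
      ring
    have hXsucc : X *ᵥ (w (k+1)) = X *ᵥ (w k) - (ε * u k) • (fun i => X i (jj k)) := by
      rw [hwsucc, mulVec_sub, mulVec_smul]
      congr 1
      simp [mulVec_single]
      rfl
    show (X *ᵥ (w (k+1))) ⬝ᵥ (X *ᵥ (w (k+1))) = _
    rw [hXsucc, lsb_expand, hmix k, hcol1 (jj k)]
    show _ = (X *ᵥ w k) ⬝ᵥ (X *ᵥ w k) - ε * (2 - ε) * (u k)^2
    ring
  have hd_nonneg : ∀ k, 0 ≤ d k := fun k => lsb_dot_self_nonneg _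
  -- u² ≤ d
  have hu_sq_le : ∀ k, (u k)^2 ≤ d k := by
    intro k
    have hcs := Finset.sum_mul_sq_le_sq_mul_sq Finset.univ (fun i => (X *ᵥ w k) i)
      (fun i => X i (jj k))
    have h1 : (∑ i, (X *ᵥ w k) i * X i (jj k)) = u k := hmix k
    have h2 : (∑ i, ((fun i => X i (jj k)) i)^2) = 1 := hcols (jj k)
    have h3 : (∑ i, ((X *ᵥ w k) i)^2) = d k := by
      simp [hd, dotProduct, pow_two]
    rw [h1] at hcs
    calc (u k)^2 ≤ (∑ i, ((X *ᵥ w k) i)^2) * (∑ i, (X i (jj k))^2) := hcs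
      _ = d k := by rw [hcols (jj k), h3, mul_one]
  -- lam * d ≤ p * u²
  have hlower : ∀ k, lam * d k ≤ (p:ℝ) * (u k)^2 := by
    intro k
    have h1 : lam * d k ≤ (A *ᵥ w k) ⬝ᵥ (A *ᵥ w k) := by
      have := lsb_eig_lower X lam hlam_min (w k)
      rw [lsb_quad_eq] at this
      exact this
    have h2 : (A *ᵥ w k) ⬝ᵥ (A *ᵥ w k) ≤ (p:ℝ) * (u k)^2 := by
      have hae : ∀ j, ((A *ᵥ w k) j)^2 ≤ (u k)^2 := by
        intro j
        have := hjmax k j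
        rw [hcorr k j] at this
        have habs : |(A *ᵥ w k) j| ≤ |u k| := this
        calc ((A *ᵥ w k) j)^2 = |(A *ᵥ w k) j|^2 := (sq_abs _).symm
          _ ≤ |u k|^2 := by exact pow_le_pow_left₀ (abs_nonneg _) habs 2
          _ = (u k)^2 := sq_abs _
      calc (A *ᵥ w k) ⬝ᵥ (A *ᵥ w k) = ∑ j, ((A *ᵥ w k) j)^2 := by
            simp [dotProduct, pow_two]
        _ ≤ ∑ j : Fin p, (u k)^2 := Finset.sum_le_sum fun j _ => hae j
        _ = (p:ℝ) * (u k)^2 := by simp [Finset.sum_const, mul_comm]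
    linarith
  -- positivity facts about lam and gamma
  have hquad : ∀ v : Fin p → ℝ, v ⬝ᵥ A *ᵥ v = (X *ᵥ v) ⬝ᵥ (X *ᵥ v) := fun v => lsb_quad_eq X v
  obtain ⟨v, hv0, hveig⟩ := hlam_eig
  have hvv : 0 < v ⬝ᵥ v := lsb_dot_self_pos v hv0
  have hlam_pos : 0 < lam := by
    have h1 : v ⬝ᵥ A *ᵥ v = lam * (v ⬝ᵥ v) := by
      rw [hveig, dotProduct_smul, smul_eq_mul]
    have h2 : 0 ≤ lam * (v ⬝ᵥ v) := by
      rw [← h1, hquad v]; exact lsb_dot_self_nonneg _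
    have h3 : 0 ≤ lam := by nlinarith [h2, hvv]
    exact lt_of_le_of_ne h3 (Ne.symm hlam_ne)
  have hlam_le_p : lam ≤ (p:ℝ) := by
    have h1 : lam * (v ⬝ᵥ v) = (X *ᵥ v) ⬝ᵥ (X *ᵥ v) := by
      rw [← hquad v, hveig, dotProduct_smul, smul_eq_mul]
    have h2 : (X *ᵥ v) ⬝ᵥ (X *ᵥ v) ≤ (p:ℝ) * (v ⬝ᵥ v) := by
      have hrow : ∀ i : Fin n, ((X *ᵥ v) i)^2 ≤ (∑ j, (X i j)^2) * (v ⬝ᵥ v) := by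
        intro i
        have := Finset.sum_mul_sq_le_sq_mul_sq Finset.univ (fun j => X i j) v
        calc ((X *ᵥ v) i)^2 = (∑ j, X i j * v j)^2 := by simp [Matrix.mulVec, dotProduct]
          _ ≤ (∑ j, (X i j)^2) * (∑ j, (v j)^2) := this
          _ = (∑ j, (X i j)^2) * (v ⬝ᵥ v) := by simp [dotProduct, pow_two]
      calc (X *ᵥ v) ⬝ᵥ (X *ᵥ v) = ∑ i, ((X *ᵥ v) i)^2 := by simp [dotProduct, pow_two]
        _ ≤ ∑ i : Fin n, (∑ j, (X i j)^2) * (v ⬝ᵥ v) := Finset.sum_le_sum fun i _ => hrow i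
        _ = (∑ i : Fin n, ∑ j, (X i j)^2) * (v ⬝ᵥ v) := by rw [Finset.sum_mul]
        _ = (∑ j : Fin p, ∑ i : Fin n, (X i j)^2) * (v ⬝ᵥ v) := by rw [Finset.sum_comm]
        _ = (p:ℝ) * (v ⬝ᵥ v) := by simp [hcols]
    have := h1.trans_le h2
    exact le_of_mul_le_mul_right (by linarith) hvv
  have hεε : ε * (2 - ε) ≤ 1 := by nlinarith
  have hεε0 : 0 < ε * (2 - ε) := by positivity
  have hγ0 : 0 ≤ γ := by
    rw [hγ]
    rw [sub_nonneg, div_le_one (by positivity)]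
    nlinarith
  have hγ1 : γ < 1 := by
    rw [hγ]
    have : 0 < ε * (2 - ε) * lam / (4 * (p:ℝ)) := by positivity
    linarith
  -- geometric decay of d
  have hd_geom : ∀ k, d k ≤ γ^k * d 0 := by
    intro k
    induction k with
    | zero => simp
    | succ k ih =>
      have hstep : d (k+1) ≤ γ * d k := by
        rw [hd_rec k, hγ]
        have h1 : lam * d k ≤ (p:ℝ) * (u k)^2 := hlower k
        have h2 : 0 ≤ d k := hd_nonneg k
        rw [sub_mul, one_mul, div_mul_eq_mul_div, sub_le_sub_iff_left,
          div_le_iff₀ (by positivity)]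
        nlinarith [mul_le_mul_of_nonneg_left h1 hεε0.le, mul_nonneg (mul_nonneg hεε0.le hpR.le) (sq_nonneg (u k))]
      calc d (k+1) ≤ γ * d k := hstep
        _ ≤ γ * (γ^k * d 0) := by
            exact mul_le_mul_of_nonneg_left ih hγ0
        _ = γ^(k+1) * d 0 := by ring
  -- ℓ1 norm bounded by sum of |u i|
  have hl1 : ∀ k, (∑ j, |β k j|) ≤ ε * ∑ i ∈ Finset.range k, |u i| := by
    intro k
    induction k with
    | zero => simp [hβ0]
    | succ k ih =>
      have hsingle : (∑ j, |((ε * u k) • (Pi.single (jj k) (1:ℝ) : Fin p → ℝ)) j|) = ε * |u k| := by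
        have h : ∀ j : Fin p, |((ε * u k) • (Pi.single (jj k) (1:ℝ) : Fin p → ℝ)) j|
            = if j = jj k then ε * |u k| else 0 := by
          intro j
          simp only [Pi.smul_apply, smul_eq_mul, Pi.single_apply]
          by_cases hj : j = jj k
          · simp [hj, abs_mul, abs_of_pos hε0]
          · simp [hj]
        simp_rw [h]
        rw [Finset.sum_ite_eq' Finset.univ (jj k) (fun _ => ε * |u k|)]
        simp
      calc (∑ j, |β (k+1) j|)
          ≤ ∑ j, (|β k j| + |((ε * u k) • (Pi.single (jj k) (1:ℝ) : Fin p → ℝ)) j|) := by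
            apply Finset.sum_le_sum
            intro j _
            rw [hupd k]
            exact abs_add_le _ _
        _ = (∑ j, |β k j|) + ∑ j, |((ε * u k) • (Pi.single (jj k) (1:ℝ) : Fin p → ℝ)) j| :=
            Finset.sum_add_distrib
        _ ≤ ε * (∑ i ∈ Finset.range k, |u i|) + ε * |u k| := by
            rw [hsingle]; exact add_le_add_left ih _
        _ = ε * ∑ i ∈ Finset.range (k+1), |u i| := by
            rw [Finset.sum_range_succ]; ring
  -- telescoping
  have htel : ∀ k, ∑ i ∈ Finset.range k, (ε * (2 - ε) * (u i)^2) = d 0 - d k := by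
    intro k
    have := Finset.sum_range_sub' d k
    rw [← this]
    apply Finset.sum_congr rfl
    intro i _
    rw [hd_rec i]
    ring
  -- rewrite goal sums in terms of d
  have hgoal0 : (∑ i, (X.mulVec βLS i) ^ 2) = d 0 := by
    have hw0 : w 0 = βLS := by simp [hw, hβ0]
    show _ = (X *ᵥ (w 0)) ⬝ᵥ (X *ᵥ (w 0))
    rw [hw0]
    simp [dotProduct, pow_two]
  have hgoalk : ∀ k, (∑ i, (X.mulVec βLS i - X.mulVec (β k) i) ^ 2) = d k := by
    intro k
    show _ = (X *ᵥ (w k)) ⬝ᵥ (X *ᵥ (w k))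
    have : X *ᵥ (w k) = X *ᵥ βLS - X *ᵥ β k := mulVec_sub X βLS (β k)
    rw [this]
    simp [dotProduct, pow_two]
  intro k
  rw [hgoal0, hgoalk k, le_min_iff]
  constructor
  · -- first bound
    set S := ∑ i ∈ Finset.range k, (u i)^2 with hS
    have hS0 : 0 ≤ S := Finset.sum_nonneg fun i _ => sq_nonneg _
    have hteleS : ε * (2 - ε) * S = d 0 - d k := by
      rw [hS, Finset.mul_sum]
      rw [← htel k]
    have hsum_abs : (∑ i ∈ Finset.range k, |u i|) ≤ Real.sqrt ((k:ℝ) * S) := by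
      have hcs := sq_sum_le_card_mul_sum_sq (s := Finset.range k) (f := fun i => |u i|)
      have h1 : (∑ i ∈ Finset.range k, |u i|^2) = S := by
        rw [hS]; exact Finset.sum_congr rfl fun i _ => sq_abs _
      rw [h1, Finset.card_range] at hcs
      have h2 : (0:ℝ) ≤ ∑ i ∈ Finset.range k, |u i| :=
        Finset.sum_nonneg fun i _ => abs_nonneg _
      calc (∑ i ∈ Finset.range k, |u i|)
          = Real.sqrt ((∑ i ∈ Finset.range k, |u i|)^2) := (Real.sqrt_sq h2).symm
        _ ≤ Real.sqrt ((k:ℝ) * S) := Real.sqrt_le_sqrt (by exact_mod_cast hcs)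
    have hfinal : ε * Real.sqrt ((k:ℝ) * S)
        = Real.sqrt (k:ℝ) * Real.sqrt (ε / (2 - ε)) * Real.sqrt (d 0 - d k) := by
      rw [← hteleS]
      have h2 : (0:ℝ) ≤ ε/(2-ε) := by positivity
      conv_lhs => rw [← Real.sqrt_sq hε0.le, ← Real.sqrt_mul (sq_nonneg ε)]
      rw [mul_assoc, ← Real.sqrt_mul h2, ← Real.sqrt_mul (Nat.cast_nonneg k)]
      congr 1
      field_simp
    calc (∑ j, |β k j|) ≤ ε * ∑ i ∈ Finset.range k, |u i| := hl1 k
      _ ≤ ε * Real.sqrt ((k:ℝ) * S) := by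
          exact mul_le_mul_of_nonneg_left hsum_abs hε0.le
      _ = _ := hfinal
  · -- second bound
    set q := Real.sqrt γ with hq
    have hq0 : 0 ≤ q := Real.sqrt_nonneg γ
    have hq1 : q < 1 := by
      rw [hq, show (1:ℝ) = Real.sqrt 1 by simp]
      exact Real.sqrt_lt_sqrt hγ0 (by simpa using hγ1)
    have h1q : (0:ℝ) < 1 - q := by linarith
    have hrpow : γ ^ ((k:ℝ)/2) = q^k := by
      rw [show ((k:ℝ)/2) = (1/2) * (k:ℝ) by ring, Real.rpow_mul hγ0,
        Real.rpow_natCast, hq, Real.sqrt_eq_rpow]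
    have habsu : ∀ i, |u i| ≤ q^i * Real.sqrt (d 0) := by
      intro i
      calc |u i| = Real.sqrt ((u i)^2) := (Real.sqrt_sq_eq_abs _).symm
        _ ≤ Real.sqrt (γ^i * d 0) := Real.sqrt_le_sqrt ((hu_sq_le i).trans (hd_geom i))
        _ = q^i * Real.sqrt (d 0) := by
            rw [Real.sqrt_mul (pow_nonneg hγ0 i), lsb_sqrt_pow γ hγ0 i, hq]
    have hsum : (∑ i ∈ Finset.range k, |u i|)
        ≤ Real.sqrt (d 0) * ∑ i ∈ Finset.range k, q^i := by
      calc (∑ i ∈ Finset.range k, |u i|)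
          ≤ ∑ i ∈ Finset.range k, q^i * Real.sqrt (d 0) :=
            Finset.sum_le_sum fun i _ => habsu i
        _ = Real.sqrt (d 0) * ∑ i ∈ Finset.range k, q^i := by
            rw [Finset.mul_sum]
            exact Finset.sum_congr rfl fun i _ => mul_comm _ _
    have hgeom : (∑ i ∈ Finset.range k, q^i) = (1 - q^k)/(1 - q) := by
      rw [geom_sum_eq hq1.ne k, ← neg_sub 1 (q^k), ← neg_sub 1 q, neg_div_neg_eq]
    calc (∑ j, |β k j|) ≤ ε * ∑ i ∈ Finset.range k, |u i| := hl1 k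
      _ ≤ ε * (Real.sqrt (d 0) * ((1 - q^k)/(1 - q))) := by
          rw [← hgeom]
          exact mul_le_mul_of_nonneg_left hsum hε0.le
      _ = (ε * Real.sqrt (d 0) / (1 - q)) * (1 - γ ^ ((k:ℝ)/2)) := by
          rw [hrpow]; ring

end
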